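/- arXiv:0906.0465 — 4 statements merged into one kernel-verified Lean document; each statement's English description precedes it below -/
import Mathlib

section
/- If p is a prime such that 2p + 1 = 3^q for some positive integer q, then 1/p belongs to the middle-third Cantor set. -/
/-! Since `3 ^ q - 1 = 2 * p`, we have `1 / p = 2 / (3 ^ q - 1) = ∑_{n ≥ 1} 2 / 3 ^ (q * n)`, a
geometric series whose ternary expansion has the digit `2` exactly at the positions divisible by `q`
and `0` elsewhere. -/

def cantorSet3 : Set ℝ :=
  {x | ∃ a : ℕ → ℕ, (∀ k, a k = 0 ∨ a k = 2) ∧ x = ∑' k : ℕ, (a k : ℝ) / 3 ^ (k + 1)}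

theorem tsum_geometric_succ_of_lt_one {r : ℝ} (h₀ : 0 ≤ r) (h₁ : r < 1) :
    ∑' n : ℕ, r ^ (n + 1) = r / (1 - r) := by
  simp_rw [pow_succ', tsum_mul_left, tsum_geometric_of_lt_one h₀ h₁, div_eq_mul_inv]

theorem tsum_ite_dvd_succ {α : Type*} [AddCommMonoid α] [TopologicalSpace α] {q : ℕ}
    (hq : 0 < q) (f : ℕ → α) :
    ∑' k : ℕ, (if q ∣ k + 1 then f (k + 1) else 0) = ∑' n : ℕ, f (q * (n + 1)) := by
  have hinj : Function.Injective fun n : ℕ => q * n + (q - 1) := fun m n hmn => by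
    simpa [hq.ne'] using hmn
  rw [← hinj.tsum_eq]
  · refine tsum_congr fun n => ?_
    have hsucc : q * n + (q - 1) + 1 = q * (n + 1) := by rw [mul_add_one]; omega
    simp [hsucc]
  · intro k hk
    obtain ⟨m, hm⟩ : q ∣ k + 1 := by by_contra h; simp [h] at hk
    obtain ⟨n, rfl⟩ := Nat.exists_eq_add_one_of_ne_zero (by rintro rfl; simp at hm : m ≠ 0)
    refine ⟨n, show q * n + (q - 1) = k by rw [mul_add_one] at hm; omega⟩

theorem two_div_three_pow_sub_one_mem_cantorSet3 {q : ℕ} (hq : 0 < q) :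
    2 / ((3 : ℝ) ^ q - 1) ∈ cantorSet3 := by
  refine ⟨fun k => if q ∣ k + 1 then 2 else 0, fun k => by dsimp only; split_ifs <;> simp, ?_⟩
  have hpow : 1 < (3 : ℝ) ^ q := one_lt_pow₀ (by norm_num) hq.ne'
  have hdigits : ∑' k : ℕ, ((if q ∣ k + 1 then 2 else 0 : ℕ) : ℝ) / 3 ^ (k + 1)
      = ∑' n : ℕ, 2 / (3 : ℝ) ^ (q * (n + 1)) := by
    rw [← tsum_ite_dvd_succ hq fun k => 2 / (3 : ℝ) ^ k]
    exact tsum_congr fun k => by split_ifs <;> simp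
  rw [hdigits]
  calc
    2 / ((3 : ℝ) ^ q - 1) = 2 * ((3 ^ q)⁻¹ / (1 - (3 ^ q)⁻¹)) := by
      field_simp [(sub_pos.mpr hpow).ne']
    _ = ∑' n : ℕ, 2 * ((3 : ℝ) ^ q)⁻¹ ^ (n + 1) := by
      rw [tsum_mul_left, tsum_geometric_succ_of_lt_one (by positivity) (inv_lt_one_of_one_lt₀ hpow)]
    _ = ∑' n : ℕ, 2 / (3 : ℝ) ^ (q * (n + 1)) := by
      simp only [pow_mul, inv_pow, div_eq_mul_inv]

theorem stmt_2_general (p q : ℕ) (hq : 0 < q)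
    (h : 2 * p + 1 = 3 ^ q) : (1 / (p : ℝ)) ∈ cantorSet3 := by
  have hpow : (3 : ℝ) ^ q = 2 * p + 1 := by exact_mod_cast h.symm
  convert two_div_three_pow_sub_one_mem_cantorSet3 hq using 1
  rw [hpow, add_sub_cancel_right, div_mul_cancel_left₀ two_ne_zero, one_div]

theorem stmt_2 (p q : ℕ) (hp : p.Prime) (hq : 0 < q)
    (h : 2 * p + 1 = 3 ^ q) : (1 / (p : ℝ)) ∈ cantorSet3 :=
  stmt_2_general p q hq h
end

section
/- If p is a prime with 1/p in the middle-third Cantor set and p > 3, then p ≡ 1 (mod 3). -/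
theorem stmt_4 (p : ℕ) (hp : p.Prime) (hp3 : 3 < p)
    (hmem : (1 / (p : ℝ)) ∈ cantorSet3) : p % 3 = 1 := by
  obtain ⟨a, ha, heq⟩ := hmem
  have hp0 : (0:ℝ) < p := by positivity
  set n : ℕ := p - 1 with hn
  have hn1 : 1 ≤ n := by omega
  -- p divides 3^n - 1
  have hp3' : ¬ (p ∣ 3) := by
    intro h
    have := Nat.le_of_dvd (by norm_num) h
    omega
  have h3ne : (3 : ZMod p) ≠ 0 := by
    intro h
    have : ((3:ℕ) : ZMod p) = 0 := by exact_mod_cast h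
    rw [ZMod.natCast_eq_zero_iff] at this
    exact hp3' this
  haveI : Fact p.Prime := ⟨hp⟩
  have hfermat : (3 : ZMod p) ^ (p - 1) = 1 := ZMod.pow_card_sub_one_eq_one h3ne
  have hdvd : p ∣ 3 ^ n - 1 := by
    have h1 : (1:ℕ) ≤ 3 ^ n := Nat.one_le_pow _ _ (by norm_num)
    have : ((3 ^ n - 1 : ℕ) : ZMod p) = 0 := by
      push_cast [h1]
      rw [hfermat]
      ring
    rwa [ZMod.natCast_eq_zero_iff] at this
  obtain ⟨m, hm⟩ := hdvd
  have hmR : (3:ℝ) ^ n = p * m + 1 := by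
    have h1 : (1:ℕ) ≤ 3 ^ n := Nat.one_le_pow _ _ (by norm_num)
    have : (3:ℕ) ^ n = p * m + 1 := by omega
    exact_mod_cast this
  -- summability
  set f : ℕ → ℝ := fun k => (a k : ℝ) / 3 ^ (k + 1) with hf
  have hfle : ∀ k, f k ≤ 2 * (1/3 : ℝ) ^ (k + 1) := by
    intro k
    have : (a k : ℝ) ≤ 2 := by rcases ha k with h | h <;> rw [h] <;> norm_num
    rw [hf]
    simp only [one_div, inv_pow]
    rw [div_eq_mul_inv]
    gcongr
  have hfnn : ∀ k, 0 ≤ f k := by intro k; positivity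
  have hgsum : Summable (fun k : ℕ => 2 * (1/3 : ℝ) ^ (k + 1)) := by
    apply Summable.mul_left
    exact (summable_geometric_of_lt_one (by norm_num) (by norm_num)).comp_injective
      (add_left_injective 1)
  have hsum : Summable f := Summable.of_nonneg_of_le hfnn hfle hgsum
  have hgtsum : ∑' k : ℕ, 2 * (1/3 : ℝ) ^ (k + 1) = 1 := by
    have : ∀ k : ℕ, 2 * (1/3 : ℝ) ^ (k + 1) = (2/3) * (1/3) ^ k := by
      intro k; rw [pow_succ]; ring
    rw [tsum_congr this, tsum_mul_left, tsum_geometric_of_lt_one (by norm_num) (by norm_num)]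
    norm_num
  -- split the sum
  have hsplit : (1:ℝ) / p = ∑ k ∈ Finset.range n, f k + ∑' j : ℕ, f (j + n) := by
    rw [heq]
    exact (Summable.sum_add_tsum_nat_add n hsum).symm
  set r2 : ℝ := ∑' j : ℕ, (a (j + n) : ℝ) / 3 ^ (j + 1) with hr2
  have hsum2 : Summable (fun j : ℕ => (a (j + n) : ℝ) / 3 ^ (j + 1)) := by
    apply Summable.of_nonneg_of_le (fun j => by positivity)
      (fun j => ?_) hgsum
    have : (a (j + n) : ℝ) ≤ 2 := by rcases ha (j + n) with h | h <;> rw [h] <;> norm_num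
    simp only [one_div, inv_pow]
    rw [div_eq_mul_inv]
    gcongr
  have hr2nn : 0 ≤ r2 := tsum_nonneg (fun j => by positivity)
  have hr2le : r2 ≤ 1 := by
    rw [hr2, ← hgtsum]
    apply Summable.tsum_le_tsum _ hsum2 hgsum
    intro j
    have : (a (j + n) : ℝ) ≤ 2 := by rcases ha (j + n) with h | h <;> rw [h] <;> norm_num
    simp only [one_div, inv_pow]
    rw [div_eq_mul_inv]
    gcongr
  -- multiply by 3^n
  set M : ℕ := ∑ k ∈ Finset.range n, a k * 3 ^ (n - 1 - k) with hM
  have htail : (3:ℝ) ^ n * ∑' j : ℕ, f (j + n) = r2 := by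
    rw [← tsum_mul_left]
    apply tsum_congr
    intro j
    rw [hf]
    have h3 : (3:ℝ) ^ (j + n + 1) = 3 ^ (j + 1) * 3 ^ n := by
      rw [← pow_add]; ring_nf
    field_simp [h3]
    ring
  have hhead : (3:ℝ) ^ n * ∑ k ∈ Finset.range n, f k = M := by
    rw [Finset.mul_sum, hM]
    push_cast
    apply Finset.sum_congr rfl
    intro k hk
    rw [Finset.mem_range] at hk
    rw [hf]
    have h3 : (3:ℝ) ^ n = 3 ^ (n - 1 - k) * 3 ^ (k + 1) := by
      rw [← pow_add]
      congr 1
      omega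
    rw [h3]
    field_simp
  have hmain : (m:ℝ) + 1 / p = M + r2 := by
    have h1 : (3:ℝ) ^ n * (1 / p) = (m:ℝ) + 1 / p := by
      rw [hmR]
      field_simp
    have h2 : (3:ℝ) ^ n * (1 / p) = (M:ℝ) + r2 := by
      rw [hsplit, mul_add, hhead, htail]
    linarith
  -- m = M
  have hinvpos : 0 < 1 / (p:ℝ) := by positivity
  have hinvlt : 1 / (p:ℝ) < 1 := by
    rw [div_lt_one hp0]
    exact_mod_cast by omega
  have hmM : m = M := by
    have habs : |(((m:ℤ) - M : ℤ) : ℝ)| < 1 := by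
      rw [abs_lt]
      constructor <;> push_cast <;> linarith
    have habs2 : |(m:ℤ) - M| < 1 := by exact_mod_cast habs
    rw [abs_lt] at habs2
    omega
  have hpM : p * M = 3 ^ n - 1 := by rw [← hmM]; exact hm.symm
  -- M mod 3
  obtain ⟨n', hn'⟩ : ∃ n', n = n' + 1 := ⟨n - 1, by omega⟩
  have hMmod : M % 3 = a n' % 3 := by
    have hsplitM : M = (∑ k ∈ Finset.range n', a k * 3 ^ (n' + 1 - 1 - k)) +
        a n' * 3 ^ (n' + 1 - 1 - n') := by
      rw [hM, hn', Finset.sum_range_succ]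
    have h0 : n' + 1 - 1 - n' = 0 := by omega
    rw [h0, pow_zero, mul_one] at hsplitM
    have hdvd3 : 3 ∣ ∑ k ∈ Finset.range n', a k * 3 ^ (n' + 1 - 1 - k) := by
      apply Finset.dvd_sum
      intro k hk
      rw [Finset.mem_range] at hk
      apply Dvd.dvd.mul_left
      apply dvd_pow_self
      omega
    omega
  -- finish mod 3
  have h3n : (3:ℕ) ∣ 3 ^ n := dvd_pow_self 3 (by omega)
  have h3nge : 3 ≤ 3 ^ n := by
    calc (3:ℕ) = 3 ^ 1 := by norm_num
    _ ≤ 3 ^ n := Nat.pow_le_pow_right (by norm_num) hn1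
  have hpM2 : (p * M) % 3 = 2 := by omega
  have hpne0 : p % 3 ≠ 0 := by
    intro h
    have h3p : (3:ℕ) ∣ p := by omega
    rw [Nat.prime_dvd_prime_iff_eq (by norm_num) hp] at h3p
    omega
  have hmul : (p % 3) * (M % 3) % 3 = 2 := by rw [← Nat.mul_mod]; exact hpM2
  rcases ha n' with hd | hd <;> rw [hd] at hMmod
  · simp [hMmod] at hmul
  · have hM2 : M % 3 = 2 := by omega
    rw [hM2] at hmul
    have : p % 3 = 1 ∨ p % 3 = 2 := by omega
    rcases this with h | h
    · exact h
    · rw [h] at hmul; norm_num at hmul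
end

section
/- If p is a positive integer such that 1/p lies in the middle-third Cantor set, and k₁ is the unique positive integer with 3^{k₁-1} ≤ 2p < 3^{k₁} (assuming 3 ∤ p and p > 1), then 2/3^{k₁} ≤ 1/p < 1/3^{k₁-1}, i.e., 2p ≤ 3^{k₁} < 3p. -/
lemma cantor_gap (a : ℕ → ℕ) (ha : ∀ k, a k = 0 ∨ a k = 2) (m : ℕ) (x : ℝ)
    (hx : x = ∑' k : ℕ, (a k : ℝ) / 3 ^ (k + 1))
    (h1 : (1:ℝ) / 3 ^ m < x) (h2 : x < 2 / 3 ^ m) : False := by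
  set f : ℕ → ℝ := fun k => (a k : ℝ) / 3 ^ (k + 1) with hf
  have hfnn : ∀ k, 0 ≤ f k := fun k => by positivity
  have hfle : ∀ k, f k ≤ 2 / 3 ^ (k + 1) := by
    intro k
    rcases ha k with h | h <;> simp [hf, h] <;> positivity
  have hgeo : Summable (fun k : ℕ => (2:ℝ) / 3 ^ (k + 1)) := by
    have : Summable (fun k : ℕ => (2/3 : ℝ) * (1/3) ^ k) :=
      (summable_geometric_of_lt_one (by norm_num) (by norm_num)).mul_left _
    refine this.congr fun k => ?_
    rw [div_pow, one_pow, pow_succ]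
    ring
  have hsum : Summable f := Summable.of_nonneg_of_le hfnn hfle hgeo
  have htsum2 : ∑' k : ℕ, (2:ℝ) / 3 ^ (k + 1) = 1 := by
    have h := tsum_geometric_of_lt_one (by norm_num : (0:ℝ) ≤ 1/3) (by norm_num)
    calc ∑' k : ℕ, (2:ℝ) / 3 ^ (k + 1) = ∑' k : ℕ, (2/3 : ℝ) * (1/3) ^ k := by
          refine tsum_congr fun k => ?_
          rw [div_pow, one_pow, pow_succ]; ring
      _ = (2/3) * ((1 : ℝ) - 1/3)⁻¹ := by rw [tsum_mul_left, h]
      _ = 1 := by norm_num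
  by_cases hex : ∃ j, j < m ∧ a j = 2
  · obtain ⟨j, hjm, haj⟩ := hex
    have hle : f j ≤ ∑' k, f k := Summable.le_tsum hsum j fun i _ => hfnn i
    rw [← hx] at hle
    have hfj : f j = 2 / 3 ^ (j + 1) := by simp [hf, haj]
    have : (2:ℝ) / 3 ^ m ≤ 2 / 3 ^ (j + 1) := by
      apply div_le_div_of_nonneg_left (by norm_num) (by positivity)
      exact pow_le_pow_right₀ (by norm_num) hjm
    linarith [hfj ▸ hle]
  · push_neg at hex
    have hzero : ∀ j < m, f j = 0 := by
      intro j hj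
      rcases ha j with h | h
      · simp [hf, h]
      · exact absurd h (hex j hj)
    have hshift := (Summable.sum_add_tsum_nat_add m hsum).symm
    have hsum0 : ∑ i ∈ Finset.range m, f i = 0 :=
      Finset.sum_eq_zero fun i hi => hzero i (Finset.mem_range.mp hi)
    have hx2 : x = ∑' k : ℕ, f (k + m) := by rw [hx, hshift, hsum0, zero_add]
    have hgeo2 : Summable (fun k : ℕ => (1 / 3 ^ m : ℝ) * (2 / 3 ^ (k + 1))) :=
      hgeo.mul_left ((1: ℝ) / 3 ^ m)
    have hub : ∑' k : ℕ, f (k + m) ≤ ∑' k : ℕ, (1 / 3 ^ m : ℝ) * (2 / 3 ^ (k + 1)) := by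
      refine Summable.tsum_le_tsum (fun k => ?_) ((summable_nat_add_iff m).mpr hsum) hgeo2
      calc f (k + m) ≤ 2 / 3 ^ (k + m + 1) := hfle _
        _ = (1 / 3 ^ m : ℝ) * (2 / 3 ^ (k + 1)) := by
            rw [show k + m + 1 = (k + 1) + m by omega, pow_add]
            field_simp
    rw [tsum_mul_left, htsum2, mul_one] at hub
    rw [hx2] at h1
    linarith

theorem stmt_7 (p k₁ : ℕ) (hp : 1 < p) (h3 : ¬ 3 ∣ p)
    (hmem : (1 / (p : ℝ)) ∈ cantorSet3) (hk₁ : 0 < k₁)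
    (hlow : 3 ^ (k₁ - 1) ≤ 2 * p) (hhigh : 2 * p < 3 ^ k₁) :
    2 * p ≤ 3 ^ k₁ ∧ 3 ^ k₁ < 3 * p := by
  refine ⟨hhigh.le, ?_⟩
  by_contra hcon
  push_neg at hcon
  set m := k₁ - 1 with hm
  have hk : k₁ = m + 1 := (Nat.succ_pred_eq_of_pos hk₁).symm
  have hple : p ≤ 3 ^ m := by
    have : 3 * p ≤ 3 * 3 ^ m := by
      calc 3 * p ≤ 3 ^ k₁ := hcon
        _ = 3 * 3 ^ m := by rw [hk, pow_succ]; ring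
    omega
  have hplt : p < 3 ^ m := by
    rcases lt_or_eq_of_le hple with h | h
    · exact h
    · exfalso
      rcases Nat.eq_zero_or_pos m with h0 | h0
      · simp [h0] at h; omega
      · exact h3 ⟨3 ^ (m - 1), by rw [h, ← pow_succ']; congr 1; omega⟩
  have hodd : ¬ (2 * p = 3 ^ m) := by
    intro h
    have ho : Odd ((3:ℕ) ^ m) := Odd.pow (by decide)
    rw [← h] at ho
    obtain ⟨r, hr⟩ := ho
    omega
  have hlt2 : 3 ^ m < 2 * p := lt_of_le_of_ne hlow (fun h => hodd h.symm)
  obtain ⟨a, ha, hx⟩ := hmem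
  have hp0 : (0:ℝ) < p := by positivity
  have h3m : (0:ℝ) < 3 ^ m := by positivity
  apply cantor_gap a ha m (1 / (p:ℝ)) hx
  · have hc : (p:ℝ) < 3 ^ m := by exact_mod_cast hplt
    rw [div_lt_div_iff₀ h3m hp0]
    nlinarith
  · have hc : (3:ℝ) ^ m < 2 * p := by exact_mod_cast hlt2
    rw [div_lt_div_iff₀ hp0 h3m]
    nlinarith
end

section
/- The number 5 is a base-4 repunit prime (it satisfies 3·5 + 1 = 4^2), yet 1/5 does not belong to the middle-quarter Cantor set C₄. -/
/-- One step of the middle-(1/N) Cantor construction: the two affine images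
with ratio `r` keeping the left and right parts of each set. -/
def cantorStepMid (r : ℝ) (S : Set ℝ) : Set ℝ :=
  (fun x => r * x) '' S ∪ (fun x => r * x + (1 - r)) '' S

/-- The middle-(1/N) Cantor set: start from [0,1], repeatedly remove from each
closed interval the open middle interval of relative length 1/N, and intersect. -/
def cantorMiddle (N : ℕ) : Set ℝ :=
  ⋂ n : ℕ, (cantorStepMid (((N : ℝ) - 1) / (2 * N)))^[n] (Set.Icc 0 1)

/-!
For `N = 4` the contraction ratio is `r = 3/8`. Undoing the two affine maps twice sends
`1/5` to `64/45`, `-11/45`, `-136/45` or `-211/45`, none of which lies in `[0,1]`; so `1/5`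
already misses the second stage of the construction (it sits in the gap `(9/64, 15/64)`).
-/

theorem mem_cantorStepMid_iff {r : ℝ} (hr : r ≠ 0) {S : Set ℝ} {x : ℝ} :
    x ∈ cantorStepMid r S ↔ x / r ∈ S ∨ (x - (1 - r)) / r ∈ S := by
  simp only [cantorStepMid, Set.mem_union, Set.mem_image]
  refine or_congr ⟨?_, fun h => ⟨_, h, ?_⟩⟩ ⟨?_, fun h => ⟨_, h, ?_⟩⟩
  · rintro ⟨y, hy, rfl⟩
    rwa [mul_div_cancel_left₀ y hr]
  · exact mul_div_cancel₀ x hr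
  · rintro ⟨y, hy, rfl⟩
    rwa [add_sub_cancel_right, mul_div_cancel_left₀ y hr]
  · rw [mul_div_cancel₀ _ hr, sub_add_cancel]

theorem stmt_10 :
    Nat.Prime 5 ∧ (∃ q : ℕ, q.Prime ∧ (4 - 1) * 5 + 1 = 4 ^ q) ∧
    (1 / (5 : ℝ)) ∉ cantorMiddle 4 := by
  refine ⟨by norm_num, ⟨2, by norm_num, by norm_num⟩, fun h => ?_⟩
  have hr : ((4 : ℕ) - 1 : ℝ) / (2 * (4 : ℕ)) ≠ 0 := by norm_num
  have h2 := Set.mem_iInter.mp h 2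
  simp only [Function.iterate_succ, Function.iterate_zero, Function.comp_apply, id_eq,
    mem_cantorStepMid_iff hr, Set.mem_Icc] at h2
  norm_num at h2
end
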